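/- Let 0 < ε ≤ 1/2 and let k be an integer with k ≥ 10 + 2(1−ε)/ε. Let t > 0 be defined by (1/√(2π)) ∫_t^∞ e^{-z²/2} dz = 2^{-k-2}. Then (1/8) · Pr[Z > sqrt(ε/(1−ε)) · t] ≥ 0.003 (εk)^{-1/2} · 2^{-εk/(1−ε)}, where Z is a standard Gaussian random variable. -/

import Mathlib

/-!
Write `A = ε / (1 - ε)` and `s = √A * t`. Comparing the integrand with a shifted Gaussian gives
`Pr[Z > x] ≤ exp (-x²/2) / 2` for `x ≥ 0`, and integrating over `(x, x + 1/(2x)]` gives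
`Pr[Z > x] ≥ exp (-x²/2) / (10 x)` for `x ≥ 1`. The upper bound at `t` yields
`t² ≤ 2 (k + 1) log 2`; the lower bound at `√(1/A)`, where `2 ^ (-(k + 2))` is already exceeded
because `k ≥ 10 + 2/A`, yields `t² > 1/A`. Hence `1 ≤ s ≤ 2 √(ε k)` and
`exp (-s²/2) ≥ 2 ^ (-A (k + 1)) ≥ 2 ^ (-A k) / 2`, and the lower bound at `s` gives the claim.
-/

/-- The upper-tail probability of a standard Gaussian:
`Pr[Z > s] = (1/√(2π)) ∫_s^∞ e^{-z²/2} dz`. -/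
noncomputable def gaussTail (s : ℝ) : ℝ :=
  (Real.sqrt (2 * Real.pi))⁻¹ * ∫ z in Set.Ioi s, Real.exp (-z ^ 2 / 2)

open MeasureTheory Set Real

lemma integrable_exp_neg_sq_div_two : Integrable fun z : ℝ => exp (-z ^ 2 / 2) := by
  convert integrable_exp_neg_mul_sq (by norm_num : (0 : ℝ) < 1 / 2) using 2 with z
  ring_nf

lemma integral_Ioi_exp_neg_sub_sq_div_two (t : ℝ) :
    ∫ z in Ioi t, exp (-(z - t) ^ 2 / 2) = √(2 * π) / 2 := by
  have hshift := (measurePreserving_sub_right volume t).setIntegral_preimage_emb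
    (measurableEmbedding_subRight t) (fun z => exp (-z ^ 2 / 2)) (Ioi 0)
  simp only [preimage_sub_const_Ioi, zero_add] at hshift
  rw [hshift]
  convert integral_gaussian_Ioi (1 / 2) using 3 <;> ring_nf

lemma gaussTail_antitone : Antitone gaussTail := fun a b hab =>
  mul_le_mul_of_nonneg_left (setIntegral_mono_set integrable_exp_neg_sq_div_two.integrableOn
    (ae_of_all _ fun z => (exp_pos _).le) (Ioi_subset_Ioi hab).eventuallyLE) (by positivity)

lemma gaussTail_le_exp_div_two {t : ℝ} (ht : 0 ≤ t) : gaussTail t ≤ exp (-t ^ 2 / 2) / 2 := by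
  have hpt : ∀ z ∈ Ioi t, exp (-z ^ 2 / 2) ≤ exp (-t ^ 2 / 2) * exp (-(z - t) ^ 2 / 2) := by
    intro z hz
    rw [← exp_add]
    gcongr
    nlinarith [mem_Ioi.mp hz]
  have hint := setIntegral_mono_on integrable_exp_neg_sq_div_two.integrableOn
    ((integrable_exp_neg_sq_div_two.comp_sub_right t).const_mul _).integrableOn measurableSet_Ioi hpt
  rw [integral_const_mul, integral_Ioi_exp_neg_sub_sq_div_two] at hint
  calc gaussTail t ≤ (√(2 * π))⁻¹ * (exp (-t ^ 2 / 2) * (√(2 * π) / 2)) := by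
        unfold gaussTail; gcongr
    _ = exp (-t ^ 2 / 2) / 2 := by field_simp

lemma mul_exp_le_integral_Ioi {s δ : ℝ} (hs : 0 ≤ s) (hδ : 0 ≤ δ) :
    δ * exp (-(s + δ) ^ 2 / 2) ≤ ∫ z in Ioi s, exp (-z ^ 2 / 2) := by
  calc δ * exp (-(s + δ) ^ 2 / 2) = ∫ _ in Ioc s (s + δ), exp (-(s + δ) ^ 2 / 2) := by
        rw [setIntegral_const, measureReal_def, volume_Ioc, add_sub_cancel_left,
          ENNReal.toReal_ofReal hδ, smul_eq_mul]
    _ ≤ ∫ z in Ioc s (s + δ), exp (-z ^ 2 / 2) := by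
        refine setIntegral_mono_on (integrableOn_const measure_Ioc_lt_top.ne)
          integrable_exp_neg_sq_div_two.integrableOn measurableSet_Ioc fun z ⟨hsz, hzs⟩ => ?_
        gcongr
        nlinarith
    _ ≤ ∫ z in Ioi s, exp (-z ^ 2 / 2) :=
        setIntegral_mono_set integrable_exp_neg_sq_div_two.integrableOn
          (ae_of_all _ fun z => (exp_pos _).le) Ioc_subset_Ioi_self.eventuallyLE

lemma sqrt_two_pi_le_five_mul_exp : √(2 * π) ≤ 5 * exp (-(5 / 8)) := by
  rw [sqrt_le_left (by positivity), mul_pow, ← exp_nat_mul]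
  have hquarter : 3 / 4 ≤ exp (-(1 / 4)) := by linarith [add_one_le_exp (-(1 / 4))]
  have hsplit : exp ((2 : ℕ) * -(5 / 8)) = exp (-1) * exp (-(1 / 4)) := by
    rw [← exp_add]; norm_num
  nlinarith [pi_lt_d2, exp_neg_one_gt_d9]

lemma exp_neg_sq_div_le_gaussTail {s : ℝ} (hs : 1 ≤ s) :
    exp (-s ^ 2 / 2) / (10 * s) ≤ gaussTail s := by
  have hs0 : 0 < s := by linarith
  have hexp : exp (-(5 / 8)) * exp (-s ^ 2 / 2) ≤ exp (-(s + 1 / (2 * s)) ^ 2 / 2) := by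
    have hsq : (s + 1 / (2 * s)) ^ 2 = s ^ 2 + 1 + 1 / (4 * s ^ 2) := by field_simp; ring
    have hinv : 1 / (4 * s ^ 2) ≤ 1 / 4 := by gcongr; nlinarith
    rw [← exp_add]
    gcongr
    linarith
  calc exp (-s ^ 2 / 2) / (10 * s)
      = (5 * exp (-(5 / 8)))⁻¹ * (1 / (2 * s) * (exp (-(5 / 8)) * exp (-s ^ 2 / 2))) := by
        field_simp; ring
    _ ≤ (√(2 * π))⁻¹ * (1 / (2 * s) * exp (-(s + 1 / (2 * s)) ^ 2 / 2)) := by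
        gcongr; exact sqrt_two_pi_le_five_mul_exp
    _ ≤ gaussTail s := by
        unfold gaussTail; gcongr; exact mul_exp_le_integral_Ioi hs0.le (by positivity)

lemma exp_neg_sq_div_ten_le_gaussTail {x : ℝ} (hx : 1 ≤ x) : exp (-x ^ 2) / 10 ≤ gaussTail x := by
  have hx_le : x ≤ exp (x ^ 2 / 2) := by nlinarith [add_one_le_exp (x ^ 2 / 2)]
  calc exp (-x ^ 2) / 10 = exp (-x ^ 2 / 2) / (10 * exp (x ^ 2 / 2)) := by
        rw [mul_comm, ← div_div, ← exp_sub]; ring_nf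
    _ ≤ exp (-x ^ 2 / 2) / (10 * x) := by gcongr
    _ ≤ gaussTail x := exp_neg_sq_div_le_gaussTail hx

lemma two_pow_eq_exp (n : ℕ) : (2 : ℝ) ^ n = exp (n * log 2) := by
  rw [← rpow_natCast, rpow_def_of_pos two_pos, mul_comm]

lemma sq_le_of_gaussTail_eq {t : ℝ} {n : ℕ} (ht : 0 ≤ t) (h : gaussTail t = 1 / 2 ^ (n + 1)) :
    t ^ 2 ≤ 2 * n * log 2 := by
  have hle : exp (-(n * log 2)) ≤ exp (-t ^ 2 / 2) := by
    have := gaussTail_le_exp_div_two ht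
    rw [h, pow_succ] at this
    rw [exp_neg, ← two_pow_eq_exp]
    field_simp at this ⊢
    linarith
  linarith [exp_le_exp.mp hle]

lemma sqrt_lt_of_gaussTail_eq {t y : ℝ} {n : ℕ} (hy : 1 ≤ y) (hn : 12 + 2 * y ≤ n)
    (h : gaussTail t = 1 / 2 ^ n) : √y < t := by
  refine gaussTail_antitone.reflect_lt ?_
  calc gaussTail t = exp (-(n * log 2)) := by rw [h, exp_neg, ← two_pow_eq_exp, one_div]
    _ ≤ exp (-(12 * log 2 + y)) := by gcongr; nlinarith [log_two_gt_d9]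
    _ = exp (-y) / 2 ^ 12 := by
        rw [neg_add, exp_add, exp_neg, show (12 : ℝ) = (12 : ℕ) by norm_num, ← two_pow_eq_exp]
        ring
    _ < exp (-y) / 10 := by gcongr; norm_num
    _ = exp (-√y ^ 2) / 10 := by rw [sq_sqrt (by linarith)]
    _ ≤ gaussTail √y := exp_neg_sq_div_ten_le_gaussTail (one_le_sqrt.mpr hy)

lemma sqrt_mul_le_two_sqrt {A ε t m : ℝ} (hε : 0 ≤ ε) (hA : A ≤ 2 * ε) (hm : 3 ≤ m) (ht : 0 ≤ t)
    (ht2 : t ^ 2 ≤ 2 * (m + 1) * log 2) : √A * t ≤ 2 * √(ε * m) := by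
  have hlog : (m + 1) * log 2 ≤ m := by nlinarith [log_two_lt_d9]
  have hle : A * t ^ 2 ≤ 4 * (ε * m) :=
    calc A * t ^ 2 ≤ 2 * ε * (2 * (m + 1) * log 2) := by gcongr
      _ ≤ 4 * (ε * m) := by nlinarith
  calc √A * t = √(A * t ^ 2) := by rw [sqrt_mul' _ (sq_nonneg t), sqrt_sq ht]
    _ ≤ √(4 * (ε * m)) := sqrt_le_sqrt hle
    _ = 2 * √(ε * m) := by rw [sqrt_mul' _ (by positivity), show (4 : ℝ) = 2 ^ 2 by norm_num,
        sqrt_sq two_pos.le]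

lemma rpow_neg_mul_div_two_le_exp {A x m : ℝ} (hA0 : 0 ≤ A) (hA1 : A ≤ 1)
    (hx : x ≤ 2 * (m + 1) * log 2) : (2 : ℝ) ^ (-(A * m)) / 2 ≤ exp (-(A * x) / 2) :=
  calc (2 : ℝ) ^ (-(A * m)) / 2 = 2 ^ (-(A * m)) * (2 : ℝ) ^ (-1 : ℝ) := by
        rw [rpow_neg_one, div_eq_mul_inv]
    _ ≤ 2 ^ (-(A * m)) * (2 : ℝ) ^ (-A) := by gcongr; exact one_le_two
    _ = exp (-(A * ((m + 1) * log 2))) := by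
        rw [← rpow_add two_pos, rpow_def_of_pos two_pos]; ring_nf
    _ ≤ exp (-(A * x) / 2) := by gcongr; nlinarith

theorem stmt12_general (ε : ℝ) (k : ℕ) (t : ℝ) (hε0 : 0 < ε) (hε1 : ε ≤ 1 / 2)
    (hk : (10 : ℝ) + 2 * (1 - ε) / ε ≤ (k : ℝ))
    (htail : gaussTail t = 1 / 2 ^ (k + 2)) :
    (1 / 8) * gaussTail (Real.sqrt (ε / (1 - ε)) * t) ≥
      0.003 / Real.sqrt (ε * k) * (2 : ℝ) ^ (-(ε * (k : ℝ)) / (1 - ε)) := by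
  set A := ε / (1 - ε)
  have h1ε : 0 < 1 - ε := by linarith
  have hA0 : 0 < A := div_pos hε0 h1ε
  have hA1 : A ≤ 1 := (div_le_one h1ε).mpr (by linarith)
  have hA_inv : 1 ≤ A⁻¹ := one_le_inv₀ hA0 |>.mpr hA1
  have hk_inv : 12 + 2 * A⁻¹ ≤ ((k + 2 : ℕ) : ℝ) := by
    rw [inv_div, mul_div_assoc']; push_cast; linarith
  have ht_lower : √A⁻¹ < t := sqrt_lt_of_gaussTail_eq hA_inv hk_inv htail
  have ht0 : 0 < t := (sqrt_nonneg _).trans_lt ht_lower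
  have ht_upper : t ^ 2 ≤ 2 * (k + 1) * log 2 := by
    exact_mod_cast sq_le_of_gaussTail_eq ht0.le htail
  have hs1 : 1 ≤ √A * t :=
    calc 1 = √A * √A⁻¹ := by rw [← sqrt_mul hA0.le, mul_inv_cancel₀ hA0.ne', sqrt_one]
      _ ≤ √A * t := by gcongr
  have hs_le : √A * t ≤ 2 * √(ε * k) := by
    refine sqrt_mul_le_two_sqrt hε0.le ((div_le_iff₀ h1ε).mpr (by nlinarith)) ?_ ht0.le ht_upper
    push_cast at hk_inv
    linarith
  have hexp : (2 : ℝ) ^ (-(ε * k) / (1 - ε)) / 2 ≤ exp (-(√A * t) ^ 2 / 2) := by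
    have hexponent : -(ε * k) / (1 - ε) = -(A * k) := by rw [neg_div, mul_div_right_comm]
    rw [hexponent, mul_pow, sq_sqrt hA0.le]
    exact rpow_neg_mul_div_two_le_exp hA0.le hA1 ht_upper
  have hu : 0 < √(ε * k) := by linarith [hs1.trans hs_le]
  calc 0.003 / √(ε * k) * (2 : ℝ) ^ (-(ε * k) / (1 - ε))
      ≤ 1 / 8 * ((2 : ℝ) ^ (-(ε * k) / (1 - ε)) / 2 / (10 * (2 * √(ε * k)))) := by
        field_simp; norm_num
    _ ≤ 1 / 8 * (exp (-(√A * t) ^ 2 / 2) / (10 * (√A * t))) := by gcongr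
    _ ≤ 1 / 8 * gaussTail (√A * t) := by gcongr; exact exp_neg_sq_div_le_gaussTail hs1

theorem stmt12 (ε : ℝ) (k : ℕ) (t : ℝ) (hε0 : 0 < ε) (hε1 : ε ≤ 1 / 2)
    (hk : (10 : ℝ) + 2 * (1 - ε) / ε ≤ (k : ℝ)) (ht : 0 < t)
    (htail : gaussTail t = 1 / 2 ^ (k + 2)) :
    (1 / 8) * gaussTail (Real.sqrt (ε / (1 - ε)) * t) ≥
      0.003 / Real.sqrt (ε * k) * (2 : ℝ) ^ (-(ε * (k : ℝ)) / (1 - ε)) :=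
  stmt12_general ε k t hε0 hε1 hk htail
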